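/- Let λ be a real number and set B(κ) = (λ/6)(e^{−2iπκ} − 4e^{iπκ} + 3). Then |1 + B(κ) + B(κ)²/2| ≤ 1 holds for all κ ∈ [−1,1] if and only if λ_c ≤ λ ≤ 0, where λ_c = −2^{1/3}·3^{2/3}/3 ≈ −0.8736. In other words, the second-order forward-first zigzag finite-difference scheme combined with the second-order Runge–Kutta time integrator is von Neumann stable for the advection equation exactly when the stability number λ lies in [λ_c, 0]; in particular its stability interval strictly contains the interval [−1/2, 0] of the second-order forward scheme. -/

import Mathlib

/-- `Λ(κ) = (λ/6)(e^{−2iπκ} − 4e^{iπκ} + 3)`, the amplification increment of the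
second-order forward-first zigzag scheme at scaled wavenumber `κ` and stability
number `λ`. -/
noncomputable def zigzag2Lambda (l κ : ℝ) : ℂ :=
  ((l / 6 : ℝ) : ℂ) * (Complex.exp (-2 * Complex.I * Real.pi * κ)
    - 4 * Complex.exp (Complex.I * Real.pi * κ) + 3)

/-- Auxiliary polynomial: `|G|² - 1 = (1-c)² · rk2Q l (1-c)` where `c = cos(πκ)`. -/
noncomputable def rk2Q (l u : ℝ) : ℝ :=
  l*((2/3+l^3) + u*l^2*(2/3-7/3*l) + u^2*l*(2/9-7/9*l+9/4*l^2)
    + u^3*l^2*(8/27-28/27*l) + u^4*(16/81)*l^3)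

set_option maxHeartbeats 2000000 in
theorem rk2_core2 (m u y2 : ℝ) (hm : 0 ≤ m) (hm3 : m^3 ≤ 2/3) (hu : 0 ≤ u) (hu2 : u ≤ 2)
    (hy : y2 = m^2/9*u*(2-u)*(3-u)^2) :
    (-(m/3*u^2))*(2 + 2*(-(m/3*u^2)) + ((m/3*u^2)^2 + y2)) + ((m/3*u^2)^2 + y2)^2/4 ≤ 0 := by
  subst hy
  have hC : (0:ℝ) < 8 - 28/3*u + 32/9*u^2 := by nlinarith [sq_nonneg (16*u-21)]
  have hH : (0:ℝ) ≤ 1792/3 - 11456/9*u + 32288/27*u^2 - 16640/27*u^3 + 14336/81*u^4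
      - 16384/729*u^5 := by
    nlinarith [mul_nonneg hu (sub_nonneg.2 hu2), mul_nonneg (mul_nonneg hu hu) (sub_nonneg.2 hu2),
      mul_nonneg (mul_nonneg (mul_nonneg hu hu) hu) (sub_nonneg.2 hu2),
      mul_nonneg (mul_nonneg (mul_nonneg (mul_nonneg hu hu) hu) hu) (sub_nonneg.2 hu2),
      sq_nonneg (u-1), sq_nonneg u, mul_nonneg hu hu,
      mul_nonneg (mul_nonneg hu hu) (mul_nonneg (sub_nonneg.2 hu2) (sub_nonneg.2 hu2))]
  have hid : 4*(8 - 28/3*u + 32/9*u^2)*((56/3 - 18*u + 248/27*u^2 - 212/81*u^3 + 32/81*u^4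
        - 2/81*u^5) + 2/3*(u^2/27*(u^3-16*u^2+42*u-36)) - 8/3*u*m + m^2*(8 - 28/3*u + 32/9*u^2))
      = (2*m*(8 - 28/3*u + 32/9*u^2) - 8/3*u)^2 + (1792/3 - 11456/9*u + 32288/27*u^2
        - 16640/27*u^3 + 14336/81*u^4 - 16384/729*u^5) := by ring
  have hGq : 0 ≤ (56/3 - 18*u + 248/27*u^2 - 212/81*u^3 + 32/81*u^4 - 2/81*u^5)
      + 2/3*(u^2/27*(u^3-16*u^2+42*u-36)) - 8/3*u*m + m^2*(8 - 28/3*u + 32/9*u^2) := by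
    by_contra h
    push_neg at h
    have h4 : 0 ≤ (2*m*(8 - 28/3*u + 32/9*u^2) - 8/3*u)^2 + (1792/3 - 11456/9*u + 32288/27*u^2
        - 16640/27*u^3 + 14336/81*u^4 - 16384/729*u^5) := add_nonneg (sq_nonneg _) hH
    rw [← hid] at h4
    linarith [h4, mul_pos hC (neg_pos.2 h)]
  have hD : u^3 - 16*u^2 + 42*u - 36 ≤ 0 := by
    nlinarith [sq_nonneg (2*u-3), mul_nonneg (mul_nonneg hu hu) (sub_nonneg.2 hu2)]
  have ht2 : 0 ≤ (2/3 - m^3) * (u^2/27*(36 - 42*u + 16*u^2 - u^3)) :=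
    mul_nonneg (by linarith) (mul_nonneg (by positivity) (by linarith))
  have t3 : 0 ≤ (m*u^3/3) * (((56/3 - 18*u + 248/27*u^2 - 212/81*u^3 + 32/81*u^4 - 2/81*u^5)
      + 2/3*(u^2/27*(u^3-16*u^2+42*u-36)) - 8/3*u*m + m^2*(8 - 28/3*u + 32/9*u^2))
      + (2/3 - m^3) * (u^2/27*(36 - 42*u + 16*u^2 - u^3))) :=
    mul_nonneg (by positivity) (add_nonneg hGq ht2)
  have t4 : 0 ≤ (2/3 - m^3) * (m*(u^2*(2-u)^2*(3-u)^4)/81) :=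
    mul_nonneg (by linarith) (by positivity)
  linarith [t3, t4]

theorem rk2_bridge (x y : ℝ) :
    ‖1 + ((x:ℂ) + (y:ℂ)*Complex.I) + ((x:ℂ) + (y:ℂ)*Complex.I)^2/2‖ ≤ 1 ↔
    x*(2 + 2*x + (x^2+y^2)) + (x^2+y^2)^2/4 ≤ 0 := by
  rw [← pow_le_one_iff_of_nonneg (norm_nonneg _) two_ne_zero, Complex.sq_norm]
  have h2 : (1:ℂ) + ((x:ℂ) + (y:ℂ)*Complex.I) + ((x:ℂ) + (y:ℂ)*Complex.I)^2/2
      = ((1 + x + (x^2 - y^2)/2 : ℝ) : ℂ) + ((y + x*y : ℝ) : ℂ) * Complex.I := by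
    rw [show ((x:ℂ) + (y:ℂ)*Complex.I)^2/2 = ((x:ℂ) + (y:ℂ)*Complex.I)^2 * (((1:ℝ)/2 : ℝ) : ℂ) by
      push_cast; ring]
    apply Complex.ext <;>
      simp [Complex.add_re, Complex.add_im, Complex.mul_re, Complex.mul_im, pow_two] <;> ring
  rw [h2, Complex.normSq_add_mul_I]
  constructor <;> intro h <;> nlinarith [h]

theorem rk2_zz_eq (l κ : ℝ) :
    zigzag2Lambda l κ
    = ((l/3*(Real.cos (Real.pi*κ) - 1)^2 : ℝ) : ℂ)
      + ((-(l/6)*Real.sin (Real.pi*κ)*(2*Real.cos (Real.pi*κ)+4) : ℝ) : ℂ) * Complex.I := by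
  unfold zigzag2Lambda
  rw [show (-2 * Complex.I * (Real.pi:ℂ) * (κ:ℂ)) = ((-(2*(Real.pi*κ)) : ℝ) : ℂ) * Complex.I by
        push_cast; ring,
      show (Complex.I * (Real.pi:ℂ) * (κ:ℂ)) = (((Real.pi*κ) : ℝ) : ℂ) * Complex.I by
        push_cast; ring,
      Complex.exp_mul_I, Complex.exp_mul_I,
      ← Complex.ofReal_cos, ← Complex.ofReal_sin, ← Complex.ofReal_cos, ← Complex.ofReal_sin,
      Real.cos_neg, Real.sin_neg, Real.cos_two_mul, Real.sin_two_mul]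
  push_cast
  ring

set_option maxHeartbeats 1000000 in
theorem rk2_WQ (l c s : ℝ) (hsc : s^2 + c^2 = 1) :
    (l/3*(c - 1)^2)*(2 + 2*(l/3*(c - 1)^2)
        + ((l/3*(c - 1)^2)^2 + (-(l/6)*s*(2*c+4))^2))
      + ((l/3*(c - 1)^2)^2 + (-(l/6)*s*(2*c+4))^2)^2/4
    = (1-c)^2 * rk2Q l (1-c) := by
  unfold rk2Q
  linear_combination ((4/27)*l^3 + (2/27)*l^4 + (4/81)*s^2*l^4 + (-4/27)*c^1*l^3 + (2/81)*c^1*l^4 + (8/81)*c^1*s^2*l^4 + (-1/9)*c^2*l^3 + (13/162)*c^2*l^4 + (2/27)*c^2*s^2*l^4 + (2/27)*c^3*l^3 + (-4/81)*c^3*l^4 + (2/81)*c^3*s^2*l^4 + (1/27)*c^4*l^3 + (-35/324)*c^4*l^4 + (1/324)*c^4*s^2*l^4 + (-2/81)*c^5*l^4 + (1/324)*c^6*l^4) * hsc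

set_option maxHeartbeats 4000000 in
/-- With `B(κ) = (λ/6)(e^{−2iπκ} − 4e^{iπκ} + 3)`, the RK2
amplification factor `G(κ) = 1 + B(κ) + B(κ)²/2` satisfies `|G(κ)| ≤ 1` for all
`κ ∈ [−1,1]` if and only if `λ_c ≤ λ ≤ 0`, where `λ_c = −2^{1/3}·3^{2/3}/3 ≈ −0.8736`:
the second-order forward-first zigzag scheme with the RK2 time integrator is von Neumann
stable exactly when `λ ∈ [λ_c, 0]`; in particular its stability interval strictly
contains the interval `[−1/2, 0]` of the second-order forward scheme. -/
theorem rk2_zigzag2_stability (l : ℝ) :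
    ((∀ κ ∈ Set.Icc (-1 : ℝ) 1,
        ‖1 + zigzag2Lambda l κ + zigzag2Lambda l κ ^ 2 / 2‖ ≤ 1)
      ↔ (-((2 : ℝ) ^ ((1 : ℝ) / 3) * (3 : ℝ) ^ ((2 : ℝ) / 3) / 3) ≤ l ∧ l ≤ 0)) ∧
    -((2 : ℝ) ^ ((1 : ℝ) / 3) * (3 : ℝ) ^ ((2 : ℝ) / 3) / 3) < -(1 / 2 : ℝ) := by
  have hc2 : ((2:ℝ)^((1:ℝ)/3))^(3:ℕ) = 2 := by
    rw [← Real.rpow_natCast ((2:ℝ)^((1:ℝ)/3)) 3, ← Real.rpow_mul (by norm_num : (0:ℝ) ≤ 2)]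
    norm_num
  have hc3 : ((3:ℝ)^((2:ℝ)/3))^(3:ℕ) = 9 := by
    rw [← Real.rpow_natCast ((3:ℝ)^((2:ℝ)/3)) 3, ← Real.rpow_mul (by norm_num : (0:ℝ) ≤ 3)]
    rw [show ((2:ℝ)/3) * ((3:ℕ):ℝ) = ((2:ℕ):ℝ) by push_cast; ring, Real.rpow_natCast]
    norm_num
  have hZpos : (0:ℝ) < (2:ℝ)^((1:ℝ)/3) * (3:ℝ)^((2:ℝ)/3) / 3 := by positivity
  have hZ3 : ((2:ℝ)^((1:ℝ)/3) * (3:ℝ)^((2:ℝ)/3) / 3)^(3:ℕ) = 2/3 := by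
    rw [show ((2:ℝ)^((1:ℝ)/3) * (3:ℝ)^((2:ℝ)/3) / 3)^(3:ℕ)
      = (((2:ℝ)^((1:ℝ)/3))^(3:ℕ)) * (((3:ℝ)^((2:ℝ)/3))^(3:ℕ)) / 27 by ring, hc2, hc3]
    norm_num
  obtain ⟨a, ha_def, ha3, ha_neg⟩ : ∃ a : ℝ, a = -((2:ℝ)^((1:ℝ)/3) * (3:ℝ)^((2:ℝ)/3) / 3)
      ∧ a^3 = -(2/3) ∧ a < 0 := by
    refine ⟨_, rfl, ?_, by linarith⟩
    rw [show (-((2:ℝ)^((1:ℝ)/3) * (3:ℝ)^((2:ℝ)/3) / 3))^3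
      = -(((2:ℝ)^((1:ℝ)/3) * (3:ℝ)^((2:ℝ)/3) / 3)^(3:ℕ)) by ring, hZ3]
  rw [← ha_def]
  constructor
  · constructor
    · -- forward
      intro H
      have hf : Continuous (fun v : ℝ => rk2Q l (1 - Real.cos (Real.pi * v))) := by
        unfold rk2Q; fun_prop
      have hn : ∀ n : ℕ, rk2Q l (1 - Real.cos (Real.pi * (1/((n:ℝ)+1)))) ≤ 0 := by
        intro n
        set κ : ℝ := 1/((n:ℝ)+1) with hκdef
        have hκpos : 0 < κ := by rw [hκdef]; positivity
        have hκle : κ ≤ 1 := by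
          rw [hκdef, div_le_one (by positivity)]
          linarith [Nat.cast_nonneg (α := ℝ) n]
        have hW := H κ ⟨by linarith, hκle⟩
        rw [rk2_zz_eq l κ, rk2_bridge] at hW
        rw [rk2_WQ l (Real.cos (Real.pi*κ)) (Real.sin (Real.pi*κ))
          (Real.sin_sq_add_cos_sq _)] at hW
        have hcos : Real.cos (Real.pi*κ) < 1 := by
          have h1 := Real.cos_lt_cos_of_nonneg_of_le_pi (le_refl (0:ℝ))
            (by nlinarith [Real.pi_pos] : Real.pi * κ ≤ Real.pi)
            (mul_pos Real.pi_pos hκpos)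
          rwa [Real.cos_zero] at h1
        by_contra hq
        push_neg at hq
        have := mul_pos (pow_pos (by linarith : (0:ℝ) < 1 - Real.cos (Real.pi*κ)) 2) hq
        linarith
      have hlim : Filter.Tendsto (fun n : ℕ => rk2Q l (1 - Real.cos (Real.pi * (1/((n:ℝ)+1)))))
          Filter.atTop (nhds (rk2Q l (1 - Real.cos (Real.pi * 0)))) :=
        (hf.tendsto 0).comp tendsto_one_div_add_atTop_nhds_zero_nat
      have h0 : rk2Q l (1 - Real.cos (Real.pi * 0)) ≤ 0 := le_of_tendsto' hlim hn
      have hK : l * (2/3 + l^3) ≤ 0 := by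
        rw [show Real.pi * 0 = 0 by ring, Real.cos_zero] at h0
        unfold rk2Q at h0
        linarith [h0]
      have hl0 : l ≤ 0 := by
        by_contra hp
        push_neg at hp
        nlinarith [mul_pos (mul_pos hp hp) (mul_pos hp hp)]
      have h23 : 0 ≤ 2 + 3*l^3 := by
        by_contra hq
        push_neg at hq
        have hlneg : l < 0 := by
          by_contra h0'
          push_neg at h0'
          nlinarith [mul_nonneg (mul_nonneg h0' h0') h0']
        nlinarith [mul_pos (neg_pos.2 hlneg) (show (0:ℝ) < -(2/3+l^3) by linarith)]
      refine ⟨?_, hl0⟩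
      by_contra hlt
      push_neg at hlt
      have hqd : 0 < l^2 + l*a + a^2 := by
        nlinarith [sq_nonneg (2*l+a), mul_pos_of_neg_of_neg ha_neg ha_neg]
      have hcube : 0 < a^3 - l^3 := by nlinarith [mul_pos (sub_pos.2 hlt) hqd]
      linarith [hcube, ha3, h23]
    · -- backward
      rintro ⟨h1, h2⟩ κ _
      have hqd : 0 ≤ l^2 + l*a + a^2 := by nlinarith [sq_nonneg (2*l+a), sq_nonneg a]
      have h23 : 0 ≤ 2 + 3*l^3 := by
        have hcube : 0 ≤ l^3 - a^3 := by nlinarith [mul_nonneg (sub_nonneg.2 h1) hqd]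
        linarith [hcube, ha3]
      rw [rk2_zz_eq l κ, rk2_bridge]
      set c : ℝ := Real.cos (Real.pi*κ) with hc_def
      set s : ℝ := Real.sin (Real.pi*κ) with hs_def
      have hsc : s^2 + c^2 = 1 := Real.sin_sq_add_cos_sq _
      have hcle : c ≤ 1 := Real.cos_le_one _
      have hcge : -1 ≤ c := Real.neg_one_le_cos _
      have hcore := rk2_core2 (-l) (1-c) ((-(l/6)*s*(2*c+4))^2)
        (by linarith)
        (by nlinarith)
        (by linarith) (by linarith)
        (by linear_combination (l^2/9*(c+2)^2) * hsc)
      linarith [hcore]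
  · -- strict containment
    rw [ha_def]
    have : ¬ ((2:ℝ)^((1:ℝ)/3) * (3:ℝ)^((2:ℝ)/3) / 3 ≤ 1/2) := by
      intro hcon
      have := pow_le_pow_left₀ (le_of_lt hZpos) hcon 3
      rw [hZ3] at this
      norm_num at this
    linarith [not_le.1 this]
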